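/- Fix α > 1/2 and define M_α(p) = ⌊√p / (log p)^α⌋. There exists a constant C_α > 0 such that for all sufficiently large X, the number of primes p ≤ X that are not M_α(p)-regular is at most C_α · X / (log X)^{2α}. -/

import Mathlib

open Real

/-- A prime `p` is `m`-regular if `p ∤ num(B_{2k})` for all even `2 ≤ 2k ≤ min(m, p-3)`. -/
def IsMRegular (m p : ℕ) : Prop :=
  ∀ k : ℕ, 2 ≤ 2 * k → 2 * k ≤ min m (p - 3) → ¬ ((p : ℤ) ∣ (bernoulli (2 * k)).num)

noncomputable def Mfloor (α : ℝ) (p : ℕ) : ℕ := ⌊Real.sqrt p / Real.log p ^ α⌋₊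

/-!
If `p` is not `M_α(p)`-regular, then `p ∣ num(B_{2k})` for some `k ≥ 1` with
`(2k)² (log p)^{2α} ≤ p`, in particular `p > 4k²`. The bounds `|B_n| ≤ n!` and (von Staudt–Clausen)
`den(B_{2k}) ∣ (2k+1)!` give `|num(B_{2k})| ≤ (2k+1)^{4k+2} ≤ (4k²)^{4k+2}`, so at most `4k + 2`
primes `p > 4k²` divide it. The primes `p ≤ √X` are negligible; for `√X < p ≤ X` we have
`log p > (log X)/2`, which forces `k² ≤ 2^{2α} X / (log X)^{2α}`, and summing `4k + 2` over these `k`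
gives `O(X / (log X)^{2α})`.
-/

open Filter Finset Nat

theorem bernoulli_two_mul_ne_zero {k : ℕ} (hk : k ≠ 0) : bernoulli (2 * k) ≠ 0 := by
  intro h
  have hpos := hasSum_lt (f := fun _ : ℕ => (0 : ℝ)) (i := 1) (fun n => by positivity)
    (by norm_num) hasSum_zero (hasSum_zeta_nat hk)
  simp [h] at hpos

theorem sum_range_choose_mul_factorial_le (n : ℕ) :
    ∑ k ∈ range n, (n + 1).choose k * k ! ≤ (n + 1)! := by
  -- `C(n+1,k) k! = (n+1)!/(n+1-k)! ≤ (n+1)!/2^(n-k)`, and `∑_{k<n} 2^(k-n) < 1`.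
  refine Nat.le_of_mul_le_mul_right ?_ (pow_pos two_pos n)
  calc (∑ k ∈ range n, (n + 1).choose k * k !) * 2 ^ n
      ≤ ∑ k ∈ range n, (n + 1)! * 2 ^ k := by
        rw [sum_mul]
        refine sum_le_sum fun k hk => ?_
        have hk : k ≤ n := (mem_range.1 hk).le
        have htwo : 2 ^ (n - k) ≤ (n + 1 - k)! := by
          simpa [Nat.succ_sub hk, add_comm] using
            Nat.factorial_mul_pow_le_factorial (m := 1) (n := n - k)
        calc (n + 1).choose k * k ! * 2 ^ n = (n + 1).choose k * k ! * 2 ^ (n - k) * 2 ^ k := by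
              rw [mul_assoc _ (2 ^ (n - k)), ← pow_add, Nat.sub_add_cancel hk]
          _ ≤ (n + 1).choose k * k ! * (n + 1 - k)! * 2 ^ k := by gcongr
          _ = (n + 1)! * 2 ^ k := by rw [Nat.choose_mul_factorial_mul_factorial (by omega)]
    _ = (n + 1)! * ∑ k ∈ range n, 2 ^ k := by rw [mul_sum]
    _ ≤ (n + 1)! * 2 ^ n := by
        gcongr
        exact (Nat.geomSum_lt le_rfl fun k hk => mem_range.1 hk).le

theorem abs_bernoulli_le_factorial (n : ℕ) : |bernoulli n| ≤ n ! := by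
  induction n using Nat.strong_induction_on with
  | _ n ih =>
  rcases Nat.eq_zero_or_pos n with rfl | hn
  · simp
  have hrec : ((n + 1 : ℕ) : ℚ) * bernoulli n =
      -∑ k ∈ range n, ((n + 1).choose k : ℚ) * bernoulli k := by
    have := sum_bernoulli (n + 1)
    rw [sum_range_succ, Nat.choose_succ_self_right, if_neg (by omega)] at this
    linarith
  have hsum : |∑ k ∈ range n, ((n + 1).choose k : ℚ) * bernoulli k| ≤ (n + 1)! :=
    calc _ ≤ ∑ k ∈ range n, ((n + 1).choose k : ℚ) * k ! := by
          refine (abs_sum_le_sum_abs _ _).trans (sum_le_sum fun k hk => ?_)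
          rw [abs_mul, Nat.abs_cast]
          exact mul_le_mul_of_nonneg_left (ih k (mem_range.1 hk)) (by positivity)
      _ ≤ (n + 1)! := by exact_mod_cast sum_range_choose_mul_factorial_le n
  rw [Nat.factorial_succ, Nat.cast_mul, ← abs_neg, ← hrec, abs_mul, Nat.abs_cast] at hsum
  exact le_of_mul_le_mul_left hsum (by positivity)

theorem den_bernoulli_two_mul_dvd_factorial (k : ℕ) :
    (bernoulli (2 * k)).den ∣ (2 * k + 1)! := by
  obtain ⟨z, hz⟩ := Bernoulli.vonStaudt_clausen k
  rw [eq_sub_of_add_eq hz.symm, Rat.intCast_sub_den]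
  refine (Rat.den_sum_dvd_lcm_den _ _).trans (Finset.lcm_dvd fun p hp => ?_)
  have hp := mem_filter.1 hp
  rw [one_div, Rat.inv_natCast_den_of_pos hp.2.1.pos]
  exact Nat.dvd_factorial hp.2.1.pos (Nat.lt_succ_iff.1 (mem_range.1 hp.1))

theorem natAbs_num_bernoulli_two_mul_le (k : ℕ) :
    (bernoulli (2 * k)).num.natAbs ≤ (2 * k + 1) ^ (4 * k + 2) := by
  have hden : ((bernoulli (2 * k)).den : ℚ) ≤ (2 * k + 1)! :=
    Nat.cast_le.2 (Nat.le_of_dvd (factorial_pos _) (den_bernoulli_two_mul_dvd_factorial k))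
  have hnum : ((bernoulli (2 * k)).num.natAbs : ℚ) ≤ (2 * k)! * (2 * k + 1)! := by
    rw [Nat.cast_natAbs, Int.cast_abs, ← Rat.mul_den_eq_num, abs_mul, Nat.abs_cast]
    exact mul_le_mul (abs_bernoulli_le_factorial _) hden (by positivity) (by positivity)
  calc (bernoulli (2 * k)).num.natAbs ≤ (2 * k)! * (2 * k + 1)! := by exact_mod_cast hnum
    _ ≤ (2 * k + 1)! * (2 * k + 1)! := by gcongr; omega
    _ ≤ (2 * k + 1) ^ (2 * k + 1) * (2 * k + 1) ^ (2 * k + 1) := by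
        gcongr <;> exact Nat.factorial_le_pow _
    _ = (2 * k + 1) ^ (4 * k + 2) := by rw [← pow_add]; ring_nf

theorem pow_card_le_of_forall_prime_dvd {N b : ℕ} (hN : N ≠ 0) (s : Finset ℕ)
    (hs : ∀ p ∈ s, p.Prime ∧ b ≤ p ∧ p ∣ N) : b ^ #s ≤ N :=
  calc b ^ #s = ∏ _ ∈ s, b := (prod_const b).symm
    _ ≤ ∏ p ∈ s, p := prod_le_prod' fun p hp => (hs p hp).2.1
    _ ≤ N := Nat.le_of_dvd (Nat.pos_of_ne_zero hN) <|
        prod_primes_dvd N (fun p hp => (hs p hp).1.prime) fun p hp => (hs p hp).2.2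

theorem card_le_of_forall_prime_dvd_num_bernoulli {k : ℕ} (hk : 1 ≤ k) (s : Finset ℕ)
    (hs : ∀ p ∈ s, p.Prime ∧ 4 * k ^ 2 < p ∧ (p : ℤ) ∣ (bernoulli (2 * k)).num) :
    #s ≤ 4 * k + 2 := by
  have hN : (bernoulli (2 * k)).num.natAbs ≠ 0 := by
    simpa using bernoulli_two_mul_ne_zero (by omega : k ≠ 0)
  have hpow : (4 * k ^ 2) ^ #s ≤ (4 * k ^ 2) ^ (4 * k + 2) :=
    calc (4 * k ^ 2) ^ #s ≤ (bernoulli (2 * k)).num.natAbs :=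
          pow_card_le_of_forall_prime_dvd hN s fun p hp =>
            ⟨(hs p hp).1, (hs p hp).2.1.le, Int.natCast_dvd.1 (hs p hp).2.2⟩
      _ ≤ (2 * k + 1) ^ (4 * k + 2) := natAbs_num_bernoulli_two_mul_le k
      _ ≤ (4 * k ^ 2) ^ (4 * k + 2) := by gcongr; nlinarith
  exact (Nat.pow_le_pow_iff_right (by nlinarith)).1 hpow

theorem card_le_of_forall_exists_dvd_num_bernoulli (K : ℕ) (s : Finset ℕ)
    (hs : ∀ p ∈ s, ∃ k ∈ Icc 1 K,
      p.Prime ∧ 4 * k ^ 2 < p ∧ (p : ℤ) ∣ (bernoulli (2 * k)).num) :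
    #s ≤ 6 * K ^ 2 := by
  classical
  let primesDvd (k : ℕ) : Finset ℕ :=
    s.filter fun p => p.Prime ∧ 4 * k ^ 2 < p ∧ (p : ℤ) ∣ (bernoulli (2 * k)).num
  calc #s ≤ #((Icc 1 K).biUnion primesDvd) := card_le_card fun p hp => by
        obtain ⟨k, hk, hpk⟩ := hs p hp
        exact mem_biUnion.2 ⟨k, hk, mem_filter.2 ⟨hp, hpk⟩⟩
    _ ≤ ∑ k ∈ Icc 1 K, #(primesDvd k) := card_biUnion_le
    _ ≤ ∑ k ∈ Icc 1 K, 6 * K := sum_le_sum fun k hk => by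
        have hk := mem_Icc.1 hk
        have := card_le_of_forall_prime_dvd_num_bernoulli hk.1 (primesDvd k) fun p hp =>
          (mem_filter.1 hp).2
        nlinarith
    _ = 6 * K ^ 2 := by simp; ring

theorem exists_dvd_num_bernoulli_of_not_isMRegular {α : ℝ} (hα : 0 < α) {p : ℕ}
    (hp : 1 < Real.log p) (h : ¬IsMRegular (Mfloor α p) p) :
    ∃ k, 1 ≤ k ∧ 4 * k ^ 2 < p ∧ (p : ℤ) ∣ (bernoulli (2 * k)).num ∧
      (2 * k : ℝ) ^ 2 * Real.log p ^ (2 * α) ≤ p := by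
  simp only [IsMRegular, not_forall, not_not] at h
  obtain ⟨k, hk, hkM, hdvd⟩ := h
  have hp0 : (0 : ℝ) ≤ p := Nat.cast_nonneg p
  have hlogα : 0 < Real.log p ^ α := rpow_pos_of_pos (by linarith) α
  have hbound : (2 * k : ℝ) ^ 2 * Real.log p ^ (2 * α) ≤ p := by
    have h2k : ((2 * k : ℕ) : ℝ) ≤ √p / Real.log p ^ α :=
      (Nat.cast_le.2 (hkM.trans (min_le_left _ _))).trans (Nat.floor_le (by positivity))
    rw [le_div_iff₀ hlogα, Nat.cast_mul, Nat.cast_ofNat] at h2k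
    calc (2 * k : ℝ) ^ 2 * Real.log p ^ (2 * α) = (2 * k * Real.log p ^ α) ^ 2 := by
          rw [mul_pow _ (Real.log p ^ α), ← rpow_natCast (Real.log p ^ α), ← rpow_mul (by linarith)]
          norm_num [mul_comm]
      _ ≤ √p ^ 2 := by gcongr
      _ = p := sq_sqrt hp0
  have hlog2α : 1 < Real.log p ^ (2 * α) := one_lt_rpow hp (by linarith)
  have hkp : ((4 * k ^ 2 : ℕ) : ℝ) < p :=
    calc ((4 * k ^ 2 : ℕ) : ℝ) = (2 * k : ℝ) ^ 2 * 1 := by push_cast; ring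
      _ < (2 * k : ℝ) ^ 2 * Real.log p ^ (2 * α) := by
          gcongr; exact_mod_cast pow_pos (by omega : 0 < 2 * k) 2
      _ ≤ p := hbound
  exact ⟨k, by omega, by exact_mod_cast hkp, hdvd, hbound⟩

theorem card_le_of_forall_not_isMRegular {α X : ℝ} (hα : 0 < α) (hX : exp 2 ≤ X)
    (s : Finset ℕ) (hs : ∀ p ∈ s, p.Prime ∧ √X < p ∧ (p : ℝ) ≤ X ∧ ¬IsMRegular (Mfloor α p) p) :
    (#s : ℝ) ≤ 6 * 2 ^ (2 * α) * X / Real.log X ^ (2 * α) := by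
  set L := Real.log X
  have hX0 : 0 < X := (exp_pos 2).trans_le hX
  have hL : 2 ≤ L := (le_log_iff_exp_le hX0).2 hX
  have hLα : 0 < L ^ (2 * α) := rpow_pos_of_pos (by linarith) _
  set y := √(2 ^ (2 * α) * X / L ^ (2 * α))
  have hindex : ∀ p ∈ s, ∃ k ∈ Icc 1 ⌊y⌋₊,
      p.Prime ∧ 4 * k ^ 2 < p ∧ (p : ℤ) ∣ (bernoulli (2 * k)).num := by
    intro p hp
    obtain ⟨hprime, hXp, hpX, hirreg⟩ := hs p hp
    have hlogp : L / 2 < Real.log p := by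
      rw [← Real.log_sqrt hX0.le]
      exact log_lt_log (sqrt_pos.2 hX0) hXp
    obtain ⟨k, hk, hkp, hdvd, hbound⟩ :=
      exists_dvd_num_bernoulli_of_not_isMRegular hα (by linarith) hirreg
    refine ⟨k, mem_Icc.2 ⟨hk, Nat.le_floor ?_⟩, hprime, hkp, hdvd⟩
    rw [Real.le_sqrt (by positivity) (by positivity), le_div_iff₀ hLα]
    have hLp : L ^ (2 * α) ≤ 2 ^ (2 * α) * Real.log p ^ (2 * α) := by
      rw [← mul_rpow zero_le_two (by linarith)]
      exact rpow_le_rpow (by linarith) (by linarith) (by linarith)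
    calc (k : ℝ) ^ 2 * L ^ (2 * α) ≤ (2 * k : ℝ) ^ 2 * (2 ^ (2 * α) * Real.log p ^ (2 * α)) := by
          gcongr; linarith
      _ = 2 ^ (2 * α) * ((2 * k : ℝ) ^ 2 * Real.log p ^ (2 * α)) := by ring
      _ ≤ 2 ^ (2 * α) * X := by gcongr; exact hbound.trans hpX
  calc (#s : ℝ) ≤ 6 * (⌊y⌋₊ : ℝ) ^ 2 := by
        exact_mod_cast card_le_of_forall_exists_dvd_num_bernoulli _ s hindex
    _ ≤ 6 * y ^ 2 := by gcongr; exact Nat.floor_le (sqrt_nonneg _)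
    _ = 6 * 2 ^ (2 * α) * X / L ^ (2 * α) := by
        rw [sq_sqrt (by positivity)]; ring

theorem card_le_of_forall_cast_le {x : ℝ} (hx : 0 ≤ x) (s : Finset ℕ)
    (hs : ∀ p ∈ s, (p : ℝ) ≤ x) : (#s : ℝ) ≤ x + 1 := by
  have hsub : s ⊆ range (⌊x⌋₊ + 1) := fun p hp =>
    mem_range.2 (Nat.lt_succ_of_le (Nat.le_floor (hs p hp)))
  calc (#s : ℝ) ≤ ⌊x⌋₊ + 1 := by exact_mod_cast (card_le_card hsub).trans (card_range _).le
    _ ≤ x + 1 := by gcongr; exact Nat.floor_le hx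

theorem eventually_sqrt_add_one_le_div_log_rpow (β : ℝ) :
    ∀ᶠ X : ℝ in atTop, √X + 1 ≤ X / Real.log X ^ β := by
  filter_upwards [(isLittleO_log_rpow_rpow_atTop β one_half_pos).def one_half_pos,
    eventually_gt_atTop 1] with X hlog hX
  have hL : 0 < Real.log X ^ β := rpow_pos_of_pos (log_pos hX) β
  rw [norm_of_nonneg hL.le, norm_of_nonneg (by positivity), ← sqrt_eq_rpow] at hlog
  have hsqrt : 1 ≤ √X := one_le_sqrt.2 hX.le
  rw [le_div_iff₀ hL]
  calc (√X + 1) * Real.log X ^ β ≤ (2 * √X) * (1 / 2 * √X) := by gcongr; linarith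
    _ = √X * √X := by ring
    _ = X := mul_self_sqrt (by linarith)

open Classical in
theorem stmt_14 (α : ℝ) (hα : 1 / 2 < α) :
    ∃ C : ℝ, 0 < C ∧ ∃ X₀ : ℝ, ∀ X : ℝ, X₀ ≤ X →
      (((Finset.range (⌊X⌋₊ + 1)).filter
          (fun p : ℕ => p.Prime ∧ (p : ℝ) ≤ X ∧ ¬ IsMRegular (Mfloor α p) p)).card : ℝ) ≤
        C * X / Real.log X ^ (2 * α) := by
  refine ⟨6 * 2 ^ (2 * α) + 1, by positivity, ?_⟩
  obtain ⟨X₀, hX₀⟩ := eventually_atTop.1 <|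
    (eventually_sqrt_add_one_le_div_log_rpow (2 * α)).and (eventually_ge_atTop (exp 2))
  refine ⟨X₀, fun X hX => ?_⟩
  obtain ⟨hsmall, hXe⟩ := hX₀ X hX
  set S := (Finset.range (⌊X⌋₊ + 1)).filter
    (fun p : ℕ => p.Prime ∧ (p : ℝ) ≤ X ∧ ¬ IsMRegular (Mfloor α p) p)
  have hS₁ := card_le_of_forall_cast_le (sqrt_nonneg X) (S.filter fun p => (p : ℝ) ≤ √X)
    fun p hp => (mem_filter.1 hp).2
  have hS₂ := card_le_of_forall_not_isMRegular (by linarith : 0 < α) hXe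
    (S.filter fun p => ¬(p : ℝ) ≤ √X) fun p hp => by
      obtain ⟨hpS, hp⟩ := mem_filter.1 hp
      obtain ⟨-, hprime, hpX, hirreg⟩ := mem_filter.1 hpS
      exact ⟨hprime, not_le.1 hp, hpX, hirreg⟩
  rw [← card_filter_add_card_filter_not (fun p : ℕ => (p : ℝ) ≤ √X), Nat.cast_add,
    add_mul, add_div, one_mul]
  linarith
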